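/- Let ψ₁, ψ₂ satisfy the generalised Weierstrass system ∂ψ₁ = pψ₂, ∂̄ψ₂ = −pψ₁ with p = |ψ₁|² + |ψ₂|². Then the following three conservation laws hold: ∂(ψ₁ψ̄₂) − ∂̄(ψ̄₁ψ₂) = 0 fails in general, but with R = J/p² where J = ψ̄₁∂ψ₂ − ψ₂∂ψ̄₁, one has ∂(ψ₁ψ̄₂ + R̄ψ̄₁ψ₂) − ∂̄(ψ̄₁ψ₂ + Rψ₁ψ̄₂) = 0, ∂(ψ₁² − R̄ψ₂²) + ∂̄(ψ₂² − Rψ₁²) = 0, and ∂(ψ̄₂² − R̄ψ̄₁²) + ∂̄(ψ̄₁² − Rψ̄₂²) = 0. -/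

import Mathlib

open Complex ComplexConjugate

/-- The Wirtinger derivative `∂ = ∂/∂z`. -/
noncomputable def wdz (f : ℂ → ℂ) (z : ℂ) : ℂ :=
  (1 / 2 : ℂ) * (fderiv ℝ f z 1 - I * fderiv ℝ f z I)

/-- The Wirtinger derivative `∂̄ = ∂/∂z̄`. -/
noncomputable def wdzbar (f : ℂ → ℂ) (z : ℂ) : ℂ :=
  (1 / 2 : ℂ) * (fderiv ℝ f z 1 + I * fderiv ℝ f z I)

section WirtingerLemmas

variable {f g : ℂ → ℂ} {z : ℂ}

lemma wdz_congr_nhds (h : f =ᶠ[nhds z] g) : wdz f z = wdz g z := by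
  unfold wdz; rw [h.fderiv_eq]

lemma wdzbar_congr_nhds (h : f =ᶠ[nhds z] g) : wdzbar f z = wdzbar g z := by
  unfold wdzbar; rw [h.fderiv_eq]

lemma wdz_add (hf : DifferentiableAt ℝ f z) (hg : DifferentiableAt ℝ g z) :
    wdz (fun t => f t + g t) z = wdz f z + wdz g z := by
  unfold wdz; rw [fderiv_fun_add hf hg]
  simp only [ContinuousLinearMap.add_apply]; ring

lemma wdzbar_add (hf : DifferentiableAt ℝ f z) (hg : DifferentiableAt ℝ g z) :
    wdzbar (fun t => f t + g t) z = wdzbar f z + wdzbar g z := by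
  unfold wdzbar; rw [fderiv_fun_add hf hg]
  simp only [ContinuousLinearMap.add_apply]; ring

lemma wdz_sub (hf : DifferentiableAt ℝ f z) (hg : DifferentiableAt ℝ g z) :
    wdz (fun t => f t - g t) z = wdz f z - wdz g z := by
  unfold wdz; rw [fderiv_fun_sub hf hg]
  simp only [ContinuousLinearMap.sub_apply]; ring

lemma wdzbar_sub (hf : DifferentiableAt ℝ f z) (hg : DifferentiableAt ℝ g z) :
    wdzbar (fun t => f t - g t) z = wdzbar f z - wdzbar g z := by
  unfold wdzbar; rw [fderiv_fun_sub hf hg]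
  simp only [ContinuousLinearMap.sub_apply]; ring

lemma wdz_neg (hf : DifferentiableAt ℝ f z) :
    wdz (fun t => -(f t)) z = -(wdz f z) := by
  unfold wdz; rw [fderiv_fun_neg]
  simp only [ContinuousLinearMap.neg_apply]; ring

lemma wdz_mul (hf : DifferentiableAt ℝ f z) (hg : DifferentiableAt ℝ g z) :
    wdz (fun t => f t * g t) z = wdz f z * g z + f z * wdz g z := by
  unfold wdz; rw [fderiv_fun_mul hf hg]
  simp only [ContinuousLinearMap.add_apply, ContinuousLinearMap.smul_apply, smul_eq_mul]; ring

lemma wdzbar_mul (hf : DifferentiableAt ℝ f z) (hg : DifferentiableAt ℝ g z) :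
    wdzbar (fun t => f t * g t) z = wdzbar f z * g z + f z * wdzbar g z := by
  unfold wdzbar; rw [fderiv_fun_mul hf hg]
  simp only [ContinuousLinearMap.add_apply, ContinuousLinearMap.smul_apply, smul_eq_mul]; ring

lemma wdz_sq (hf : DifferentiableAt ℝ f z) :
    wdz (fun t => f t ^ 2) z = 2 * f z * wdz f z := by
  have h : (fun t => f t ^ 2) = fun t => f t * f t := by funext t; ring
  rw [h, wdz_mul hf hf]; ring

lemma wdzbar_sq (hf : DifferentiableAt ℝ f z) :
    wdzbar (fun t => f t ^ 2) z = 2 * f z * wdzbar f z := by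
  have h : (fun t => f t ^ 2) = fun t => f t * f t := by funext t; ring
  rw [h, wdzbar_mul hf hf]; ring

lemma fderiv_conj_comp (hf : DifferentiableAt ℝ f z) (v : ℂ) :
    fderiv ℝ (fun t => conj (f t)) z v = conj (fderiv ℝ f z v) := by
  have h : (fun t => conj (f t)) = (⇑Complex.conjCLE) ∘ f := by
    funext t; simp
  rw [h, fderiv_comp z Complex.conjCLE.differentiableAt hf, Complex.conjCLE.fderiv]
  simp

lemma wdz_conj (hf : DifferentiableAt ℝ f z) :
    wdz (fun t => conj (f t)) z = conj (wdzbar f z) := by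
  unfold wdz wdzbar
  rw [fderiv_conj_comp hf, fderiv_conj_comp hf]
  simp only [map_mul, map_add, map_sub, map_div₀, map_one, map_ofNat, Complex.conj_I]
  ring

lemma wdzbar_conj (hf : DifferentiableAt ℝ f z) :
    wdzbar (fun t => conj (f t)) z = conj (wdz f z) := by
  unfold wdz wdzbar
  rw [fderiv_conj_comp hf, fderiv_conj_comp hf]
  simp only [map_mul, map_add, map_sub, map_div₀, map_one, map_ofNat, Complex.conj_I]
  ring

lemma differentiableAt_conj (hf : DifferentiableAt ℝ f z) :
    DifferentiableAt ℝ (fun t => conj (f t)) z := by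
  have h : (fun t => conj (f t)) = (⇑Complex.conjCLE) ∘ f := by
    funext t; simp
  rw [h]
  exact Complex.conjCLE.differentiableAt.comp z hf

lemma contDiffOn_conj {s : Set ℂ} {n : WithTop ℕ∞} (hf : ContDiffOn ℝ n f s) :
    ContDiffOn ℝ n (fun t => conj (f t)) s := by
  have h := (Complex.conjCLE.toContinuousLinearMap.contDiff (n := n)).comp_contDiffOn hf
  exact h.congr fun t ht => by simp

lemma contDiffOn_wdz {s : Set ℂ} (hs : IsOpen s) (hf : ContDiffOn ℝ (⊤ : ℕ∞) f s) :
    ContDiffOn ℝ (⊤ : ℕ∞) (wdz f) s := by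
  have hD : ContDiffOn ℝ (⊤ : ℕ∞) (fderiv ℝ f) s := hf.fderiv_of_isOpen hs (by simp)
  have h : wdz f = fun t => (1 / 2 : ℂ) * (fderiv ℝ f t 1 - I * fderiv ℝ f t I) := rfl
  rw [h]
  exact contDiffOn_const.mul ((hD.clm_apply contDiffOn_const).sub
    (contDiffOn_const.mul (hD.clm_apply contDiffOn_const)))

lemma wdzbar_wdz_comm {s : Set ℂ} (hs : IsOpen s) (hf : ContDiffOn ℝ (⊤ : ℕ∞) f s) (hz : z ∈ s) :
    wdzbar (wdz f) z = wdz (wdzbar f) z := by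
  have hmem : s ∈ nhds z := hs.mem_nhds hz
  have hCA : ContDiffAt ℝ (⊤ : ℕ∞) f z := hf.contDiffAt hmem
  have hD : DifferentiableAt ℝ (fderiv ℝ f) z :=
    (hCA.fderiv_right (m := (⊤ : ℕ∞)) (by simp)).differentiableAt (by simp)
  have happ : ∀ u : ℂ, DifferentiableAt ℝ (fun t => fderiv ℝ f t u) z := fun u =>
    hD.clm_apply (differentiableAt_const u)
  have hkey : ∀ u v : ℂ, fderiv ℝ (fun t => fderiv ℝ f t u) z v
      = fderiv ℝ (fderiv ℝ f) z v u := by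
    intro u v
    have h1 : HasFDerivAt (fun t => fderiv ℝ f t u)
        ((fderiv ℝ (fderiv ℝ f) z).flip u) z := by
      have h2 := hD.hasFDerivAt.clm_apply (hasFDerivAt_const u z)
      simpa using h2
    rw [h1.fderiv]
    simp
  have hsym := hCA.isSymmSndFDerivAt (by rw [minSmoothness_of_isRCLikeNormedField]; exact WithTop.coe_le_coe.mpr (le_top : (2 : ℕ∞) ≤ ⊤))
  have e1 : ∀ v, fderiv ℝ (wdz f) z v = (1 / 2 : ℂ) *
      (fderiv ℝ (fderiv ℝ f) z v 1 - I * fderiv ℝ (fderiv ℝ f) z v I) := by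
    intro v
    have h0 : wdz f = fun t => (1 / 2 : ℂ) * (fderiv ℝ f t 1 - I * fderiv ℝ f t I) := rfl
    have h2 : DifferentiableAt ℝ (fun t => fderiv ℝ f t (1 : ℂ) - I * fderiv ℝ f t I) z :=
      (happ 1).sub ((differentiableAt_const I).mul (happ I))
    rw [h0, fderiv_const_mul h2, fderiv_fun_sub (happ 1) ((differentiableAt_const I).fun_mul (happ I)),
      fderiv_const_mul (happ I)]
    simp only [ContinuousLinearMap.smul_apply, ContinuousLinearMap.sub_apply, smul_eq_mul,
      hkey]
  have e2 : ∀ v, fderiv ℝ (wdzbar f) z v = (1 / 2 : ℂ) *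
      (fderiv ℝ (fderiv ℝ f) z v 1 + I * fderiv ℝ (fderiv ℝ f) z v I) := by
    intro v
    have h0 : wdzbar f = fun t => (1 / 2 : ℂ) * (fderiv ℝ f t 1 + I * fderiv ℝ f t I) := rfl
    have h2 : DifferentiableAt ℝ (fun t => fderiv ℝ f t (1 : ℂ) + I * fderiv ℝ f t I) z :=
      (happ 1).add ((differentiableAt_const I).mul (happ I))
    rw [h0, fderiv_const_mul h2, fderiv_fun_add (happ 1) ((differentiableAt_const I).fun_mul (happ I)),
      fderiv_const_mul (happ I)]
    simp only [ContinuousLinearMap.smul_apply, ContinuousLinearMap.add_apply, smul_eq_mul,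
      hkey]
  have lhs : wdzbar (wdz f) z = (1 / 2 : ℂ) * ((1 / 2 : ℂ) *
      (fderiv ℝ (fderiv ℝ f) z 1 1 - I * fderiv ℝ (fderiv ℝ f) z 1 I) + I * ((1 / 2 : ℂ) *
      (fderiv ℝ (fderiv ℝ f) z I 1 - I * fderiv ℝ (fderiv ℝ f) z I I))) := by
    unfold wdzbar; rw [e1 1, e1 I]
  have rhs : wdz (wdzbar f) z = (1 / 2 : ℂ) * ((1 / 2 : ℂ) *
      (fderiv ℝ (fderiv ℝ f) z 1 1 + I * fderiv ℝ (fderiv ℝ f) z 1 I) - I * ((1 / 2 : ℂ) *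
      (fderiv ℝ (fderiv ℝ f) z I 1 + I * fderiv ℝ (fderiv ℝ f) z I I))) := by
    unfold wdz; rw [e2 1, e2 I]
  rw [lhs, rhs, hsym 1 I]
  ring

end WirtingerLemmas

set_option maxHeartbeats 2000000 in
/-- The three conservation laws (3.17) of the generalised Weierstrass system,
with `R = J/p²`, `J = ψ̄₁∂ψ₂ - ψ₂∂ψ̄₁`, `p = |ψ₁|² + |ψ₂|²` nowhere zero. -/
theorem gw_conservation_laws (s : Set ℂ) (hs : IsOpen s) (ψ₁ ψ₂ : ℂ → ℂ)
    (hψ₁ : ContDiffOn ℝ (⊤ : ℕ∞) ψ₁ s) (hψ₂ : ContDiffOn ℝ (⊤ : ℕ∞) ψ₂ s)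
    (p : ℂ → ℝ) (hp : ∀ z, p z = normSq (ψ₁ z) + normSq (ψ₂ z))
    (hpne : ∀ z ∈ s, p z ≠ 0)
    (h1 : ∀ z ∈ s, wdz ψ₁ z = ((p z : ℝ) : ℂ) * ψ₂ z)
    (h2 : ∀ z ∈ s, wdzbar ψ₂ z = -((p z : ℝ) : ℂ) * ψ₁ z)
    (J R : ℂ → ℂ)
    (hJ : ∀ z, J z = conj (ψ₁ z) * wdz ψ₂ z - ψ₂ z * wdz (fun u => conj (ψ₁ u)) z)
    (hR : ∀ z, R z = J z / ((p z : ℝ) : ℂ) ^ 2) :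
    ∀ z ∈ s,
      (wdz (fun t => ψ₁ t * conj (ψ₂ t) + conj (R t) * conj (ψ₁ t) * ψ₂ t) z
        - wdzbar (fun t => conj (ψ₁ t) * ψ₂ t + R t * ψ₁ t * conj (ψ₂ t)) z = 0) ∧
      (wdz (fun t => ψ₁ t ^ 2 - conj (R t) * ψ₂ t ^ 2) z
        + wdzbar (fun t => ψ₂ t ^ 2 - R t * ψ₁ t ^ 2) z = 0) ∧
      (wdz (fun t => conj (ψ₂ t) ^ 2 - conj (R t) * conj (ψ₁ t) ^ 2) z
        + wdzbar (fun t => conj (ψ₁ t) ^ 2 - R t * conj (ψ₂ t) ^ 2) z = 0) := by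
  set q : ℂ → ℂ := fun t => ψ₁ t * conj (ψ₁ t) + ψ₂ t * conj (ψ₂ t) with hqdef
  have hqp : ∀ t, q t = ((p t : ℝ) : ℂ) := by
    intro t
    rw [hqdef]
    simp only [hp t]
    push_cast
    rw [Complex.mul_conj, Complex.mul_conj]
  have hcψ₁ : ContDiffOn ℝ (⊤ : ℕ∞) (fun t => conj (ψ₁ t)) s := contDiffOn_conj hψ₁
  have hcψ₂ : ContDiffOn ℝ (⊤ : ℕ∞) (fun t => conj (ψ₂ t)) s := contDiffOn_conj hψ₂
  have hqs : ContDiffOn ℝ (⊤ : ℕ∞) q s := (hψ₁.mul hcψ₁).add (hψ₂.mul hcψ₂)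
  have hqne : ∀ t ∈ s, q t ≠ 0 := fun t ht => by
    rw [hqp t]; exact_mod_cast hpne t ht
  have hW2 : ContDiffOn ℝ (⊤ : ℕ∞) (wdz ψ₂) s := contDiffOn_wdz hs hψ₂
  have hWc1 : ContDiffOn ℝ (⊤ : ℕ∞) (wdz fun t => conj (ψ₁ t)) s := contDiffOn_wdz hs hcψ₁
  have hJfun : J = fun t => conj (ψ₁ t) * wdz ψ₂ t - ψ₂ t * wdz (fun u => conj (ψ₁ u)) t :=
    funext hJ
  have hJs : ContDiffOn ℝ (⊤ : ℕ∞) J s := by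
    rw [hJfun]; exact (hcψ₁.mul hW2).sub (hψ₂.mul hWc1)
  have hRfun : R = fun t => J t / q t ^ 2 := funext fun t => by rw [hR t, hqp t]
  have hRs : ContDiffOn ℝ (⊤ : ℕ∞) R s := by
    rw [hRfun]
    have h' := hJs.mul ((hqs.pow 2).inv fun t ht => pow_ne_zero 2 (hqne t ht))
    exact h'.congr fun t ht => by rw [div_eq_mul_inv]; rfl
  have hqconj : ∀ t, conj (q t) = q t := by
    intro t; rw [hqdef]; simp; ring
  intro z hz
  have hmem : s ∈ nhds z := hs.mem_nhds hz
  have diffat : ∀ {f : ℂ → ℂ}, ContDiffOn ℝ (⊤ : ℕ∞) f s → DifferentiableAt ℝ f z := fun h =>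
    (h.contDiffAt hmem).differentiableAt (by simp)
  have dψ₁ : DifferentiableAt ℝ ψ₁ z := diffat hψ₁
  have dψ₂ : DifferentiableAt ℝ ψ₂ z := diffat hψ₂
  have dcψ₁ : DifferentiableAt ℝ (fun t => conj (ψ₁ t)) z := diffat hcψ₁
  have dcψ₂ : DifferentiableAt ℝ (fun t => conj (ψ₂ t)) z := diffat hcψ₂
  have dq : DifferentiableAt ℝ q z := diffat hqs
  have dW2 : DifferentiableAt ℝ (wdz ψ₂) z := diffat hW2
  have dWc1 : DifferentiableAt ℝ (wdz fun t => conj (ψ₁ t)) z := diffat hWc1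
  have dJ : DifferentiableAt ℝ J z := diffat hJs
  have dR : DifferentiableAt ℝ R z := diffat hRs
  have dcR : DifferentiableAt ℝ (fun t => conj (R t)) z := differentiableAt_conj dR
  have hqzne : q z ≠ 0 := hqne z hz
  -- pointwise values
  have hv1 : wdz ψ₁ z = q z * ψ₂ z := by rw [h1 z hz, hqp]
  have hv2 : wdzbar ψ₂ z = -(q z * ψ₁ z) := by rw [h2 z hz, hqp]; ring
  have hv5 : wdz (fun t => conj (ψ₁ t)) z = conj (wdzbar ψ₁ z) := wdz_conj dψ₁
  have hv6 : wdzbar (fun t => conj (ψ₂ t)) z = conj (wdz ψ₂ z) := wdzbar_conj dψ₂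
  have hv3 : wdz (fun t => conj (ψ₂ t)) z = -(q z * conj (ψ₁ z)) := by
    rw [wdz_conj dψ₂, hv2]
    simp only [map_neg, map_mul, hqconj]
  have hv4 : wdzbar (fun t => conj (ψ₁ t)) z = q z * conj (ψ₂ z) := by
    rw [wdzbar_conj dψ₁, hv1]
    simp only [map_mul, hqconj]
  have hq1 : wdz q z = ψ₁ z * conj (wdzbar ψ₁ z) + conj (ψ₂ z) * wdz ψ₂ z := by
    rw [hqdef, wdz_add (dψ₁.fun_mul dcψ₁) (dψ₂.fun_mul dcψ₂), wdz_mul dψ₁ dcψ₁, wdz_mul dψ₂ dcψ₂,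
      hv1, hv3, hv5]
    ring
  have hq2 : wdzbar q z = conj (ψ₁ z) * wdzbar ψ₁ z + ψ₂ z * conj (wdz ψ₂ z) := by
    rw [hqdef, wdzbar_add (dψ₁.fun_mul dcψ₁) (dψ₂.fun_mul dcψ₂), wdzbar_mul dψ₁ dcψ₁,
      wdzbar_mul dψ₂ dcψ₂, hv4, hv2, hv6]
    ring
  -- eventual equalities from the GW system
  have ev2 : wdzbar ψ₂ =ᶠ[nhds z] fun t => -(q t * ψ₁ t) :=
    Filter.eventuallyEq_of_mem hmem fun t ht => by rw [h2 t ht, hqp t]; ring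
  have ddiff1 : ∀ t ∈ s, DifferentiableAt ℝ ψ₁ t := fun t ht =>
    (hψ₁.contDiffAt (hs.mem_nhds ht)).differentiableAt (by simp)
  have ev3 : wdzbar (fun t => conj (ψ₁ t)) =ᶠ[nhds z] fun t => q t * conj (ψ₂ t) :=
    Filter.eventuallyEq_of_mem hmem fun t ht => by
      rw [wdzbar_conj (ddiff1 t ht), h1 t ht, ← hqp t, map_mul, hqconj]
  -- second derivative facts
  have hWW2 : wdzbar (wdz ψ₂) z = -(wdz q z * ψ₁ z + q z * wdz ψ₁ z) := by
    rw [wdzbar_wdz_comm hs hψ₂ hz, wdz_congr_nhds ev2, wdz_neg (dq.fun_mul dψ₁), wdz_mul dq dψ₁]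
  have hWWc1 : wdzbar (wdz fun t => conj (ψ₁ t)) z
      = wdz q z * conj (ψ₂ z) + q z * wdz (fun t => conj (ψ₂ t)) z := by
    rw [wdzbar_wdz_comm hs hcψ₁ hz, wdz_congr_nhds ev3, wdz_mul dq dcψ₂]
  have hJbar : wdzbar J z = 0 := by
    rw [hJfun, wdzbar_sub (dcψ₁.fun_mul dW2) (dψ₂.fun_mul dWc1), wdzbar_mul dcψ₁ dW2,
      wdzbar_mul dψ₂ dWc1, hv4, hv2, hWW2, hWWc1, hq1, hv1, hv3, hv5]
    rw [hqdef]
    simp only []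
    ring
  have hJz : J z = conj (ψ₁ z) * wdz ψ₂ z - ψ₂ z * conj (wdzbar ψ₁ z) := by
    rw [hJ z, hv5]
  have hRz : R z = (conj (ψ₁ z) * wdz ψ₂ z - ψ₂ z * conj (wdzbar ψ₁ z)) / q z ^ 2 := by
    rw [hR z, ← hqp z, hJz]
  have hv8 : conj (R z)
      = (ψ₁ z * conj (wdz ψ₂ z) - conj (ψ₂ z) * wdzbar ψ₁ z) / q z ^ 2 := by
    rw [hRz]
    simp only [map_div₀, map_sub, map_mul, map_pow, Complex.conj_conj, hqconj]
  -- derivative of R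
  have hev : J =ᶠ[nhds z] fun t => R t * q t ^ 2 :=
    Filter.eventuallyEq_of_mem hmem fun t ht => by
      rw [hR t, ← hqp t]
      exact (div_mul_cancel₀ (J t) (pow_ne_zero 2 (hqne t ht))).symm
  have h0 : wdzbar R z * q z ^ 2 + R z * (2 * q z * wdzbar q z) = 0 := by
    have h0' := (wdzbar_congr_nhds hev).symm.trans hJbar
    rw [wdzbar_mul dR (dq.fun_pow 2), wdzbar_sq dq] at h0'
    linear_combination h0'
  have hv9 : wdzbar R z = -(R z * (2 * q z * wdzbar q z)) / q z ^ 2 := by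
    rw [eq_div_iff (pow_ne_zero 2 hqzne)]
    linear_combination h0
  have hv10 : wdz (fun t => conj (R t)) z
      = -(conj (R z) * (2 * q z * (ψ₁ z * conj (wdzbar ψ₁ z) + conj (ψ₂ z) * wdz ψ₂ z)))
        / q z ^ 2 := by
    rw [wdz_conj dR, hv9, hq2]
    simp only [map_div₀, map_neg, map_mul, map_pow, map_add, map_ofNat, Complex.conj_conj,
      hqconj]
  have hv9' : wdzbar R z
      = -(R z * (2 * q z * (conj (ψ₁ z) * wdzbar ψ₁ z + ψ₂ z * conj (wdz ψ₂ z))))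
        / q z ^ 2 := by rw [hv9, hq2]
  have hQne : ψ₁ z * conj (ψ₁ z) + ψ₂ z * conj (ψ₂ z) ≠ 0 := by
    have := hqzne; rw [hqdef] at this; exact this
  refine ⟨?_, ?_, ?_⟩
  · rw [wdz_add (dψ₁.fun_mul dcψ₂) ((dcR.fun_mul dcψ₁).fun_mul dψ₂), wdz_mul dψ₁ dcψ₂,
      wdz_mul (dcR.fun_mul dcψ₁) dψ₂, wdz_mul dcR dcψ₁,
      wdzbar_add (dcψ₁.fun_mul dψ₂) ((dR.fun_mul dψ₁).fun_mul dcψ₂), wdzbar_mul dcψ₁ dψ₂,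
      wdzbar_mul (dR.fun_mul dψ₁) dcψ₂, wdzbar_mul dR dψ₁,
      hv10, hv9', hv1, hv2, hv3, hv4, hv5, hv6, hv8, hRz]
    rw [hqdef]
    field_simp
    ring
  · rw [wdz_sub (dψ₁.fun_pow 2) (dcR.fun_mul (dψ₂.fun_pow 2)), wdz_sq dψ₁, wdz_mul dcR (dψ₂.fun_pow 2),
      wdz_sq dψ₂,
      wdzbar_sub (dψ₂.fun_pow 2) (dR.fun_mul (dψ₁.fun_pow 2)), wdzbar_sq dψ₂,
      wdzbar_mul dR (dψ₁.fun_pow 2), wdzbar_sq dψ₁,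
      hv10, hv9', hv1, hv2, hv8, hRz]
    rw [hqdef]
    field_simp
    ring
  · rw [wdz_sub (dcψ₂.fun_pow 2) (dcR.fun_mul (dcψ₁.fun_pow 2)), wdz_sq dcψ₂,
      wdz_mul dcR (dcψ₁.fun_pow 2), wdz_sq dcψ₁,
      wdzbar_sub (dcψ₁.fun_pow 2) (dR.fun_mul (dcψ₂.fun_pow 2)), wdzbar_sq dcψ₁,
      wdzbar_mul dR (dcψ₂.fun_pow 2), wdzbar_sq dcψ₂,
      hv10, hv9', hv3, hv4, hv5, hv6, hv8, hRz]
    rw [hqdef]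
    field_simp
    ring
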